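/- Along every Hamiltonian flow line of P, with E=τ, L=−q_φ, p=2P and K = q_θ² + 𝐃²/sin²θ + p·a²cos²θ the (constant) Carter constant, the following first-order equations hold at every parameter value s: ρ⁴·(dr/ds)² = Δ·(−p·r² − K) + 𝐏²; ρ⁴·(dθ/ds)² = K − p·a²cos²θ − 𝐃²/sin²θ; ρ²·(dφ/ds) = 𝐃/sin²θ + a𝐏/Δ; and ρ²·(dt/ds) = a𝐃 + (r²+a²)𝐏/Δ. (Geodesics of the Kerr–Newman metric in block I are exactly the projections of such flow lines, so these are the Kerr–Newman geodesic equations.) -/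

import Mathlib

/-!
Carter's separation: on block I the Hamiltonian splits as
`2ρ²P = 𝐏²/Δ − Δξ² − q_θ² − 𝐃²/sin²θ`, a radial part minus an angular part.
Differentiating this in the momenta gives `ρ²ṫ = a𝐃 + (r²+a²)𝐏/Δ`, `ρ²φ̇ = 𝐃/sin²θ + a𝐏/Δ`,
`ρ²ṙ = −Δξ` and `ρ²θ̇ = −q_θ`. Since `ρ² = r² + a²cos²θ`, evaluating it shows that the Carter
constant `K = q_θ² + 𝐃²/sin²θ + p a²cos²θ` also equals `𝐏²/Δ − Δξ² − p r²`; squaring the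
radial and polar velocities then gives the two remaining equations.
-/

noncomputable section
open Real Set

namespace Stmt1

/-- `Δ(r) = r² − 2Mr + a² + Q²`. -/
def Δ (M a Q r : ℝ) : ℝ := r ^ 2 - 2 * M * r + a ^ 2 + Q ^ 2

/-- Outer horizon `r₊ = M + √(M² − (a² + Q²))`. -/
def rplus (M a Q : ℝ) : ℝ := M + Real.sqrt (M ^ 2 - (a ^ 2 + Q ^ 2))

/-- `ρ²(r,θ) = r² + a²cos²θ`. -/
def rho2 (a r θ : ℝ) : ℝ := r ^ 2 + a ^ 2 * Real.cos θ ^ 2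

/-- `σ²(r,θ) = (r²+a²)² − a²Δ(r)sin²θ`. -/
def sigma2 (M a Q r θ : ℝ) : ℝ :=
  (r ^ 2 + a ^ 2) ^ 2 - a ^ 2 * Δ M a Q r * Real.sin θ ^ 2

/-- The Hamiltonian `P`, the principal symbol of half the d'Alembertian of the
Kerr–Newman metric on block I. -/
def P (M a Q : ℝ) (_t r θ _φ τ ξ qθ qφ : ℝ) : ℝ :=
  (1 / (2 * rho2 a r θ)) *
    ((sigma2 M a Q r θ / Δ M a Q r) * τ ^ 2
      - (2 * a * (Q ^ 2 - 2 * M * r) / Δ M a Q r) * qφ * τ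
      - ((Δ M a Q r - a ^ 2 * Real.sin θ ^ 2) / (Δ M a Q r * Real.sin θ ^ 2)) * qφ ^ 2
      - Δ M a Q r * ξ ^ 2 - qθ ^ 2)

/-- A Hamiltonian flow line of `P` in block I : a `C¹` curve
`s ↦ (t,r,θ,φ;τ,ξ,q_θ,q_φ)(s)` with `r(s) > r₊` and `0 < θ(s) < π` satisfying
Hamilton's equations `dx/ds = ∂P/∂p`, `dp/ds = −∂P/∂x`. -/
structure FlowLine (M a Q : ℝ) where
  t : ℝ → ℝ
  r : ℝ → ℝ
  θ : ℝ → ℝ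
  φ : ℝ → ℝ
  τ : ℝ → ℝ
  ξ : ℝ → ℝ
  qθ : ℝ → ℝ
  qφ : ℝ → ℝ
  hr : ∀ s, rplus M a Q < r s
  hθ : ∀ s, θ s ∈ Set.Ioo 0 Real.pi
  eq_t : ∀ s, HasDerivAt t
    (deriv (fun u => P M a Q (t s) (r s) (θ s) (φ s) u (ξ s) (qθ s) (qφ s)) (τ s)) s
  eq_r : ∀ s, HasDerivAt r
    (deriv (fun u => P M a Q (t s) (r s) (θ s) (φ s) (τ s) u (qθ s) (qφ s)) (ξ s)) s
  eq_θ : ∀ s, HasDerivAt θ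
    (deriv (fun u => P M a Q (t s) (r s) (θ s) (φ s) (τ s) (ξ s) u (qφ s)) (qθ s)) s
  eq_φ : ∀ s, HasDerivAt φ
    (deriv (fun u => P M a Q (t s) (r s) (θ s) (φ s) (τ s) (ξ s) (qθ s) u) (qφ s)) s
  eq_τ : ∀ s, HasDerivAt τ
    (-deriv (fun u => P M a Q u (r s) (θ s) (φ s) (τ s) (ξ s) (qθ s) (qφ s)) (t s)) s
  eq_ξ : ∀ s, HasDerivAt ξ
    (-deriv (fun u => P M a Q (t s) u (θ s) (φ s) (τ s) (ξ s) (qθ s) (qφ s)) (r s)) s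
  eq_qθ : ∀ s, HasDerivAt qθ
    (-deriv (fun u => P M a Q (t s) (r s) u (φ s) (τ s) (ξ s) (qθ s) (qφ s)) (θ s)) s
  eq_qφ : ∀ s, HasDerivAt qφ
    (-deriv (fun u => P M a Q (t s) (r s) (θ s) u (τ s) (ξ s) (qθ s) (qφ s)) (φ s)) s

/-- `p := 2P` evaluated along the flow line. -/
def pval (M a Q : ℝ) (γ : FlowLine M a Q) (s : ℝ) : ℝ :=
  2 * P M a Q (γ.t s) (γ.r s) (γ.θ s) (γ.φ s) (γ.τ s) (γ.ξ s) (γ.qθ s) (γ.qφ s)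

/-- `𝐃 := L − aE sin²θ` evaluated along the flow line (with `E = τ`, `L = −q_φ`). -/
def Dd (M a Q : ℝ) (γ : FlowLine M a Q) (s : ℝ) : ℝ :=
  (-γ.qφ s) - a * γ.τ s * Real.sin (γ.θ s) ^ 2

/-- `𝐏 := (r²+a²)E − aL` evaluated along the flow line. -/
def Pb (M a Q : ℝ) (γ : FlowLine M a Q) (s : ℝ) : ℝ :=
  ((γ.r s) ^ 2 + a ^ 2) * γ.τ s - a * (-γ.qφ s)

/-- The Carter constant `K = q_θ² + 𝐃²/sin²θ + p a² cos²θ` along the flow line. -/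
def Kc (M a Q : ℝ) (γ : FlowLine M a Q) (s : ℝ) : ℝ :=
  (γ.qθ s) ^ 2 + (Dd M a Q γ s) ^ 2 / Real.sin (γ.θ s) ^ 2
    + pval M a Q γ s * a ^ 2 * Real.cos (γ.θ s) ^ 2

/-- `𝐏 = (r²+a²)E − aL` at a point of phase space. -/
def PbAt (a r τ qφ : ℝ) : ℝ := (r ^ 2 + a ^ 2) * τ - a * (-qφ)

/-- `𝐃 = L − aE sin²θ` at a point of phase space. -/
def DdAt (a θ τ qφ : ℝ) : ℝ := (-qφ) - a * τ * Real.sin θ ^ 2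

lemma Δ_pos_of_rplus_lt {M a Q r : ℝ} (hr : rplus M a Q < r) : 0 < Δ M a Q r := by
  have hs : Real.sqrt (M ^ 2 - (a ^ 2 + Q ^ 2)) < r - M := by unfold rplus at hr; linarith
  have hD : M ^ 2 - (a ^ 2 + Q ^ 2) < (r - M) ^ 2 :=
    (Real.sqrt_lt' ((Real.sqrt_nonneg _).trans_lt hs)).1 hs
  unfold Δ
  nlinarith

section Separation

variable {M a Q t r θ φ τ ξ qθ qφ : ℝ}

lemma P_eq_separated (hΔ : Δ M a Q r ≠ 0) (hsin : Real.sin θ ≠ 0) :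
    P M a Q t r θ φ τ ξ qθ qφ =
      (PbAt a r τ qφ ^ 2 / Δ M a Q r - Δ M a Q r * ξ ^ 2 - qθ ^ 2
        - DdAt a θ τ qφ ^ 2 / Real.sin θ ^ 2) / (2 * rho2 a r θ) := by
  unfold P sigma2 PbAt DdAt
  field_simp
  unfold Δ
  ring

lemma hasDerivAt_P_τ (hΔ : Δ M a Q r ≠ 0) (hsin : Real.sin θ ≠ 0) :
    HasDerivAt (fun u => P M a Q t r θ φ u ξ qθ qφ)
      ((a * DdAt a θ τ qφ + (r ^ 2 + a ^ 2) * PbAt a r τ qφ / Δ M a Q r) / rho2 a r θ) τ := by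
  have hPb : HasDerivAt (fun u => PbAt a r u qφ) (r ^ 2 + a ^ 2) τ :=
    (((hasDerivAt_id' τ).const_mul _).sub_const _).congr_deriv (mul_one _)
  have hDd : HasDerivAt (fun u => DdAt a θ u qφ) (-(a * Real.sin θ ^ 2)) τ :=
    ((((hasDerivAt_id' τ).const_mul a).mul_const _).const_sub _).congr_deriv (by ring)
  rw [show (fun u => P M a Q t r θ φ u ξ qθ qφ) = _ from funext fun u => P_eq_separated hΔ hsin]
  refine ((((hPb.pow 2).div_const _).sub_const _).sub_const _ |>.sub
    ((hDd.pow 2).div_const _)).div_const _ |>.congr_deriv ?_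
  field_simp
  ring

lemma hasDerivAt_P_ξ :
    HasDerivAt (fun u => P M a Q t r θ φ τ u qθ qφ) (-(Δ M a Q r * ξ) / rho2 a r θ) ξ := by
  refine ((((hasDerivAt_pow 2 ξ).const_mul (Δ M a Q r)).const_sub _).sub_const (qθ ^ 2)).const_mul
    (1 / (2 * rho2 a r θ)) |>.congr_deriv ?_
  field_simp
  ring

lemma hasDerivAt_P_qθ :
    HasDerivAt (fun u => P M a Q t r θ φ τ ξ u qφ) (-qθ / rho2 a r θ) qθ := by
  refine ((hasDerivAt_pow 2 qθ).const_sub _).const_mul (1 / (2 * rho2 a r θ)) |>.congr_deriv ?_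
  field_simp
  ring

lemma hasDerivAt_P_qφ (hΔ : Δ M a Q r ≠ 0) (hsin : Real.sin θ ≠ 0) :
    HasDerivAt (fun u => P M a Q t r θ φ τ ξ qθ u)
      ((DdAt a θ τ qφ / Real.sin θ ^ 2 + a * PbAt a r τ qφ / Δ M a Q r) / rho2 a r θ) qφ := by
  have hPb : HasDerivAt (fun u => PbAt a r τ u) a qφ :=
    ((((hasDerivAt_id' qφ).neg).const_mul a).const_sub _).congr_deriv (by ring)
  have hDd : HasDerivAt (fun u => DdAt a θ τ u) (-1) qφ :=
    (hasDerivAt_id' qφ).neg.sub_const _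
  rw [show (fun u => P M a Q t r θ φ τ ξ qθ u) = _ from funext fun u => P_eq_separated hΔ hsin]
  refine ((((hPb.pow 2).div_const _).sub_const _).sub_const _ |>.sub
    ((hDd.pow 2).div_const _)).div_const _ |>.congr_deriv ?_
  field_simp
  ring

end Separation

namespace FlowLine

variable {M a Q : ℝ} (γ : FlowLine M a Q) (s : ℝ)

lemma Δ_pos : 0 < Δ M a Q (γ.r s) := Δ_pos_of_rplus_lt (γ.hr s)

lemma sin_θ_pos : 0 < Real.sin (γ.θ s) := Real.sin_pos_of_pos_of_lt_pi (γ.hθ s).1 (γ.hθ s).2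

lemma rho2_pos (hM : 0 < M) : 0 < rho2 a (γ.r s) (γ.θ s) := by
  have hr : rplus M a Q < γ.r s := γ.hr s
  have : 0 < γ.r s := by
    unfold rplus at hr
    linarith [Real.sqrt_nonneg (M ^ 2 - (a ^ 2 + Q ^ 2))]
  unfold rho2
  positivity

lemma deriv_t : deriv γ.t s =
    (a * Dd M a Q γ s + (γ.r s ^ 2 + a ^ 2) * Pb M a Q γ s / Δ M a Q (γ.r s)) /
      rho2 a (γ.r s) (γ.θ s) :=
  (γ.eq_t s).deriv.trans (hasDerivAt_P_τ (γ.Δ_pos s).ne' (γ.sin_θ_pos s).ne').deriv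

lemma deriv_r : deriv γ.r s = -(Δ M a Q (γ.r s) * γ.ξ s) / rho2 a (γ.r s) (γ.θ s) :=
  (γ.eq_r s).deriv.trans hasDerivAt_P_ξ.deriv

lemma deriv_θ : deriv γ.θ s = -γ.qθ s / rho2 a (γ.r s) (γ.θ s) :=
  (γ.eq_θ s).deriv.trans hasDerivAt_P_qθ.deriv

lemma deriv_φ : deriv γ.φ s =
    (Dd M a Q γ s / Real.sin (γ.θ s) ^ 2 + a * Pb M a Q γ s / Δ M a Q (γ.r s)) /
      rho2 a (γ.r s) (γ.θ s) :=
  (γ.eq_φ s).deriv.trans (hasDerivAt_P_qφ (γ.Δ_pos s).ne' (γ.sin_θ_pos s).ne').deriv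

lemma Kc_eq_radial (hM : 0 < M) :
    Kc M a Q γ s = Pb M a Q γ s ^ 2 / Δ M a Q (γ.r s) - Δ M a Q (γ.r s) * γ.ξ s ^ 2
      - pval M a Q γ s * γ.r s ^ 2 := by
  have hρ := (γ.rho2_pos s hM).ne'
  have hsin := (γ.sin_θ_pos s).ne'
  simp only [Kc, pval, P_eq_separated (γ.Δ_pos s).ne' hsin]
  unfold rho2 at hρ ⊢
  field_simp
  unfold Pb Dd PbAt DdAt
  ring

end FlowLine

theorem geodesic_equations_general (M a Q : ℝ) (hM : 0 < M) (γ : FlowLine M a Q) (s : ℝ) :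
    (rho2 a (γ.r s) (γ.θ s)) ^ 2 * (deriv γ.r s) ^ 2
        = Δ M a Q (γ.r s) * (-(pval M a Q γ s) * (γ.r s) ^ 2 - Kc M a Q γ s)
          + (Pb M a Q γ s) ^ 2 ∧
    (rho2 a (γ.r s) (γ.θ s)) ^ 2 * (deriv γ.θ s) ^ 2
        = Kc M a Q γ s - pval M a Q γ s * a ^ 2 * Real.cos (γ.θ s) ^ 2
          - (Dd M a Q γ s) ^ 2 / Real.sin (γ.θ s) ^ 2 ∧
    rho2 a (γ.r s) (γ.θ s) * deriv γ.φ s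
        = Dd M a Q γ s / Real.sin (γ.θ s) ^ 2
          + a * Pb M a Q γ s / Δ M a Q (γ.r s) ∧
    rho2 a (γ.r s) (γ.θ s) * deriv γ.t s
        = a * Dd M a Q γ s + ((γ.r s) ^ 2 + a ^ 2) * Pb M a Q γ s / Δ M a Q (γ.r s) := by
  have hΔ := (γ.Δ_pos s).ne'
  have hρ := (γ.rho2_pos s hM).ne'
  refine ⟨?_, ?_, ?_, ?_⟩
  · rw [γ.deriv_r, γ.Kc_eq_radial s hM]
    field_simp
    ring
  · rw [γ.deriv_θ, Kc]
    field_simp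
    ring
  · rw [γ.deriv_φ, mul_div_cancel₀ _ hρ]
  · rw [γ.deriv_t, mul_div_cancel₀ _ hρ]

/-- along every Hamiltonian flow line of `P`, with `E = τ`,
`L = −q_φ`, `p = 2P` and `K` the Carter constant, the first-order equations
`ρ⁴(dr/ds)² = Δ(−pr²−K)+𝐏²`, `ρ⁴(dθ/ds)² = K − pa²cos²θ − 𝐃²/sin²θ`,
`ρ²(dφ/ds) = 𝐃/sin²θ + a𝐏/Δ` and `ρ²(dt/ds) = a𝐃 + (r²+a²)𝐏/Δ` hold at every
parameter value `s`.  (Geodesics of the Kerr–Newman metric in block I are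
exactly the projections of such flow lines, so these are the Kerr–Newman
geodesic equations.) -/
theorem geodesic_equations (M a Q : ℝ) (hM : 0 < M) (ha : 0 < a)
    (hsub : a ^ 2 + Q ^ 2 < M ^ 2) (γ : FlowLine M a Q) (s : ℝ) :
    (rho2 a (γ.r s) (γ.θ s)) ^ 2 * (deriv γ.r s) ^ 2
        = Δ M a Q (γ.r s) * (-(pval M a Q γ s) * (γ.r s) ^ 2 - Kc M a Q γ s)
          + (Pb M a Q γ s) ^ 2 ∧
    (rho2 a (γ.r s) (γ.θ s)) ^ 2 * (deriv γ.θ s) ^ 2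
        = Kc M a Q γ s - pval M a Q γ s * a ^ 2 * Real.cos (γ.θ s) ^ 2
          - (Dd M a Q γ s) ^ 2 / Real.sin (γ.θ s) ^ 2 ∧
    rho2 a (γ.r s) (γ.θ s) * deriv γ.φ s
        = Dd M a Q γ s / Real.sin (γ.θ s) ^ 2
          + a * Pb M a Q γ s / Δ M a Q (γ.r s) ∧
    rho2 a (γ.r s) (γ.θ s) * deriv γ.t s
        = a * Dd M a Q γ s + ((γ.r s) ^ 2 + a ^ 2) * Pb M a Q γ s / Δ M a Q (γ.r s) :=
  geodesic_equations_general M a Q hM γ s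

end Stmt1
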